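/- Let Π be a normal logic program and D_Π its defeasible theory translation. For every atom p ∈ At(Π): (1) Π ⊨_WFS p iff D_Π ⊨_ADL p, and (2) Π ⊣_WFS p iff D_Π ⊣_ADL p. -/

import Mathlib

namespace DLWFS

universe u

/-- Ground literals over a type `A` of atoms: atoms and their classical complements. -/
inductive Lit (A : Type u) : Type u where
  | pos : A → Lit A
  | neg : A → Lit A

/-- The classical complement `p̄` of a literal `p`. -/
def Lit.compl {A : Type u} : Lit A → Lit A
  | .pos a => .neg a
  | .neg a => .pos a

/-- The three kinds of rules of a defeasible theory. -/
inductive RuleKind : Type where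
  | strict
  | defeasible
  | defeater
deriving DecidableEq

/-- A rule of a defeasible theory: a kind, a body (a set of literals) and a head literal. -/
structure DRule (A : Type u) where
  kind : RuleKind
  body : Set (Lit A)
  head : Lit A

/-- A defeasible theory `D = ⟨R, C, ≺⟩`. -/
structure DTheory (A : Type u) where
  rules : Set (DRule A)
  conflicts : Set (Set (Lit A))
  prec : DRule A → DRule A → Prop

namespace DTheory

variable {A : Type u}

/-- The strict rules `R_s`. -/
def Rs (D : DTheory A) : Set (DRule A) := {r ∈ D.rules | r.kind = RuleKind.strict}

/-- The defeasible rules `R_d`. -/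
def Rd (D : DTheory A) : Set (DRule A) := {r ∈ D.rules | r.kind = RuleKind.defeasible}

/-- The defeater rules `R_u`. -/
def Ru (D : DTheory A) : Set (DRule A) := {r ∈ D.rules | r.kind = RuleKind.defeater}

/-- `C[p]`: the conflict sets containing literal `p`. -/
def Cset (D : DTheory A) (p : Lit A) : Set (Set (Lit A)) := {c ∈ D.conflicts | p ∈ c}

/-- Structural conditions in the definition of a defeasible theory: a countable set of
rules with finite bodies, a countable set of finite conflict sets containing every
minimal conflict set `{p, ¬p}`, and an acyclic priority relation over non-strict rules. -/
def WellFormed (D : DTheory A) : Prop :=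
  D.rules.Countable ∧ D.conflicts.Countable ∧
  (∀ r ∈ D.rules, r.body.Finite) ∧
  (∀ c ∈ D.conflicts, c.Finite) ∧
  (∀ p : A, ({Lit.pos p, Lit.neg p} : Set (Lit A)) ∈ D.conflicts) ∧
  (∀ r s, D.prec r s → r.kind ≠ RuleKind.strict ∧ s.kind ≠ RuleKind.strict) ∧
  (∀ r, ¬ Relation.TransGen D.prec r r)

/-- `C = C_MIN`: the conflict sets are exactly the minimal ones `{p, ¬p}`. -/
def MinimalConflicts (D : DTheory A) : Prop :=
  D.conflicts = {c | ∃ p : A, c = ({Lit.pos p, Lit.neg p} : Set (Lit A))}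

end DTheory

/-- A 3-valued interpretation: a pair `⟨T, F⟩` of sets. -/
abbrev Interp (L : Type u) : Type u := Set L × Set L

variable {A : Type u}

/-- `S` is ADL-unfounded with respect to theory `D` and interpretation `I = ⟨T, F⟩`. -/
def ADLUnfounded (D : DTheory A) (I : Interp (Lit A)) (S : Set (Lit A)) : Prop :=
  ∀ p ∈ S,
    (∀ r ∈ D.Rs, r.head = p → (r.body ∩ (I.2 ∪ S)).Nonempty) ∧
    (∀ r ∈ D.Rd, r.head = p →
      (r.body ∩ (I.2 ∪ S)).Nonempty ∨
      ∃ c ∈ D.conflicts, p ∈ c ∧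
        ∀ q ∈ c \ {p}, ∃ s ∈ D.rules, s.head = q ∧ s.body ⊆ I.1 ∧
          (D.prec r s ∨ s.kind = RuleKind.strict))

/-- `S` is NDL-unfounded with respect to theory `D` and interpretation `I = ⟨T, F⟩`. -/
def NDLUnfounded (D : DTheory A) (I : Interp (Lit A)) (S : Set (Lit A)) : Prop :=
  ∀ p ∈ S,
    (∀ r ∈ D.Rs, r.head = p → (r.body ∩ (I.2 ∪ S)).Nonempty) ∧
    (∀ r ∈ D.Rd, r.head = p →
      (r.body ∩ (I.2 ∪ S)).Nonempty ∨
      ∃ c ∈ D.conflicts, p ∈ c ∧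
        ∀ q ∈ c \ {p}, ∃ s ∈ D.rules, s.head = q ∧ s.body ⊆ I.1 ∧
          ¬ D.prec s r)

/-- `U_D(I)` for ADL: the union of all ADL-unfounded sets. -/
def UA (D : DTheory A) (I : Interp (Lit A)) : Set (Lit A) :=
  ⋃₀ {S | ADLUnfounded D I S}

/-- `U_D(I)` for NDL: the union of all NDL-unfounded sets. -/
def UN (D : DTheory A) (I : Interp (Lit A)) : Set (Lit A) :=
  ⋃₀ {S | NDLUnfounded D I S}

/-- `T_D(I)`: the literals having a witness of provability with respect to `I = ⟨T, F⟩`. -/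
def TD (D : DTheory A) (I : Interp (Lit A)) : Set (Lit A) :=
  {p | ∃ r ∈ D.rules, r.head = p ∧ r.body ⊆ I.1 ∧
    (r.kind = RuleKind.strict ∨
      (r.kind = RuleKind.defeasible ∧
        ∀ c ∈ D.conflicts, p ∈ c →
          ∃ q ∈ c \ {p}, ∀ s ∈ D.rules, s.head = q →
            (D.prec s r ∨ (s.body ∩ I.2).Nonempty)))}

/-- `W_D` for ADL. -/
def WA (D : DTheory A) (I : Interp (Lit A)) : Interp (Lit A) := (TD D I, UA D I)

/-- `W_D` for NDL. -/
def WN (D : DTheory A) (I : Interp (Lit A)) : Interp (Lit A) := (TD D I, UN D I)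

/-- `I` is the well-founded model for the operator `W`: the least fixpoint of `W`
(componentwise order). -/
def IsWFModel {L : Type u} (W : Interp L → Interp L) (I : Interp L) : Prop :=
  W I = I ∧ ∀ J, W J = J → I.1 ⊆ J.1 ∧ I.2 ⊆ J.2

/-- A rule of a normal logic program: `head ← pos, ∼neg`. -/
structure NRule (A : Type u) where
  head : A
  pos : Set A
  neg : Set A

/-- A normal logic program: a set of rules. -/
abbrev NProgram (A : Type u) : Type u := Set (NRule A)

/-- Structural conditions in the definition of a normal logic program: a countable
set of ground rules with finite bodies. -/
def NProgram.WellFormed (P : NProgram A) : Prop :=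
  P.Countable ∧ ∀ r ∈ P, r.pos.Finite ∧ r.neg.Finite

/-- The immediate consequence operator `T_Π` on 3-valued interpretations. -/
def TP (P : NProgram A) (I : Interp A) : Set A :=
  {a | ∃ r ∈ P, r.head = a ∧ r.pos ⊆ I.1 ∧ r.neg ⊆ I.2}

/-- `S` is an unfounded set of program `P` with respect to interpretation `I = ⟨T, F⟩`. -/
def PUnfounded (P : NProgram A) (I : Interp A) (S : Set A) : Prop :=
  ∀ p ∈ S, ∀ r ∈ P, r.head = p →
    (r.pos ∩ (I.2 ∪ S)).Nonempty ∨ (r.neg ∩ I.1).Nonempty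

/-- `U_Π(I)`: the greatest unfounded set (union of all unfounded sets). -/
def UP (P : NProgram A) (I : Interp A) : Set A :=
  ⋃₀ {S | PUnfounded P I S}

/-- `W_Π(I) = ⟨T_Π(I), U_Π(I)⟩`. -/
def WP (P : NProgram A) (I : Interp A) : Interp A := (TP P I, UP P I)

/-- Transfinite iteration of an operator `W` from `⊥`, taking suprema at limit ordinals. -/
noncomputable def iterW {α : Type*} [CompleteLattice α] (W : α → α) : Ordinal.{0} → α :=
  fun o =>
    Ordinal.limitRecOn (motive := fun _ => α) o ⊥ (fun _ ih => W ih)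
      (fun o' _ ih => ⨆ x : Set.Iio o', ih x.1 x.2)

/-- One step of the immediate consequence operator for a set of defeasible-theory rules. -/
def TRstep (R : Set (DRule A)) (S : Set (Lit A)) : Set (Lit A) :=
  {p | ∃ r ∈ R, r.head = p ∧ r.body ⊆ S}

/-- The finite iterates `T_R ↑ n`. -/
def TRiter (R : Set (DRule A)) : ℕ → Set (Lit A)
  | 0 => ∅
  | n + 1 => TRstep R (TRiter R n)

/-- `Cl(R) = T_R ↑ ω`. -/
def ClR (R : Set (DRule A)) : Set (Lit A) := ⋃ n, TRiter R n

/-- The `α`-reduct `D_α^S` of a defeasible theory. -/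
def alphaReduct (D : DTheory A) (S : Set (Lit A)) : Set (DRule A) :=
  D.Rs ∪ {r ∈ D.Rd | ∀ c ∈ D.conflicts, r.head ∈ c → ∃ q ∈ c \ {r.head}, q ∉ S}

/-- The ambiguity-propagating operator `α_D(S) = Cl(D_α^S)`. -/
def alphaOp (D : DTheory A) (S : Set (Lit A)) : Set (Lit A) := ClR (alphaReduct D S)

/-- The `β`-reduct `D_β^S` of a defeasible theory. -/
def betaReduct (D : DTheory A) (S : Set (Lit A)) : Set (DRule A) :=
  D.Rs ∪ {r ∈ D.Rd | ∀ c ∈ D.conflicts, r.head ∈ c →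
    ∃ q ∈ c \ {r.head}, ∀ s ∈ D.rules, s.head = q → (¬ s.body ⊆ S ∨ D.prec s r)}

/-- The ambiguity-blocking operator `β_D(S) = Cl(D_β^S)`. -/
def betaOp (D : DTheory A) (S : Set (Lit A)) : Set (Lit A) := ClR (betaReduct D S)

/-- `S` is an `α`-stable set of `D`. -/
def AlphaStable (D : DTheory A) (S : Set (Lit A)) : Prop := alphaOp D S = S

/-- `S` is a `β`-stable set of `D`. -/
def BetaStable (D : DTheory A) (S : Set (Lit A)) : Prop := betaOp D S = S

/-- The sequence `X_D↑λ`: `X↑0 = ∅`, `X↑(λ+1) = β_D(β_D(X↑λ))`, unions at limits. -/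
noncomputable def Xseq (D : DTheory A) : Ordinal.{0} → Set (Lit A) :=
  iterW (fun S => betaOp D (betaOp D S))

/-- The Gelfond–Lifschitz reduct `Π^S`. -/
def glReduct (P : NProgram A) (S : Set A) : NProgram A :=
  {r' | ∃ r ∈ P, r.neg ∩ S = ∅ ∧ r' = NRule.mk r.head r.pos ∅}

/-- One step of the immediate consequence operator for a NAF-free program. -/
def TPstep (P : NProgram A) (S : Set A) : Set A :=
  {a | ∃ r ∈ P, r.head = a ∧ r.pos ⊆ S}

/-- The finite iterates `T_Π ↑ n` of a NAF-free program. -/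
def TPiter (P : NProgram A) : ℕ → Set A
  | 0 => ∅
  | n + 1 => TPstep P (TPiter P n)

/-- `Cl(Π) = T_Π ↑ ω`. -/
def ClP (P : NProgram A) : Set A := ⋃ n, TPiter P n

/-- The Gelfond–Lifschitz operator `γ_Π(S) = Cl(Π^S)`. -/
def gamma (P : NProgram A) (S : Set A) : Set A := ClP (glReduct P S)

/-- `S` is a stable model of `P`. -/
def StableModel (P : NProgram A) (S : Set A) : Prop := gamma P S = S

/-- `Prod(C[p])`: all sets obtained by choosing one literal other than `p` from each
conflict set containing `p`. -/
def ProdC (D : DTheory A) (p : Lit A) : Set (Set (Lit A)) :=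
  {Q | ∃ f : Set (Lit A) → Lit A,
    (∀ c ∈ D.conflicts, p ∈ c → f c ∈ c \ {p}) ∧
    Q = f '' {c ∈ D.conflicts | p ∈ c}}

/-- The logic program translation `Π_D` of a defeasible theory `D` (negative literals
are treated as fresh atoms, so the atoms of the program are the literals of `D`). -/
def lpTrans (D : DTheory A) : NProgram (Lit A) :=
  {r' | ∃ r ∈ D.Rs, r' = NRule.mk r.head r.body ∅} ∪
  {r' | ∃ r ∈ D.Rd, ∃ Q ∈ ProdC D r.head, r' = NRule.mk r.head r.body Q}

/-- The explicit version `Φ` of a normal program `Π`: atoms of `Φ` are the literals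
over the atoms of `Π` (`¬p` being a fresh atom). -/
def explicitVer (P : NProgram A) : NProgram (Lit A) :=
  {r' | ∃ r ∈ P, r' = NRule.mk (Lit.pos r.head) (Lit.pos '' r.pos ∪ Lit.neg '' r.neg) ∅} ∪
  {r' | ∃ p : A, r' = NRule.mk (Lit.neg p) ∅ {Lit.pos p}}

/-- The minimal conflict sets over atom type `A`. -/
def CMin (A : Type u) : Set (Set (Lit A)) :=
  {c | ∃ p : A, c = ({Lit.pos p, Lit.neg p} : Set (Lit A))}

/-- The defeasible theory translation `D_Π` of a normal program `Π`: each program rule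
becomes a strict rule (default literals `∼b` becoming negative literals `¬b`), and each
atom `p` yields a presumption `∅ ⇒ ¬p`; conflict sets are minimal and `≺` is empty. -/
def dtTrans (P : NProgram A) : DTheory A :=
  { rules :=
      {e | ∃ r ∈ P, e = DRule.mk RuleKind.strict
            (Lit.pos '' r.pos ∪ Lit.neg '' r.neg) (Lit.pos r.head)} ∪
      {e | ∃ p : A, e = DRule.mk RuleKind.defeasible ∅ (Lit.neg p)}
    conflicts := CMin A
    prec := fun _ _ => False }

/-- `M^¬ = M ∪ {¬p : p ∉ M}`, atoms being identified with positive literals. -/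
def negCompl (M : Set A) : Set (Lit A) :=
  Lit.pos '' M ∪ Lit.neg '' {p | p ∉ M}

end DLWFS

namespace DLWFS

/-! The literal `¬a` of `D_Π` mirrors the default `∼a` of `Π`. Its only rule is the presumption
`∅ ⇒ ¬a`, defeated exactly by an applicable strict rule for `a`; so `¬a` is provable iff every
rule for `a` has a false body, and `¬a` is unfounded iff `a` is provable. Consequently every
fixpoint of `W_{D_Π}` is the literal reading `litInterp I` of a program interpretation `I`, and
`litInterp I` is a fixpoint of `W_{D_Π}` iff `I` is a fixpoint of `W_Π`. As `litInterp` preserves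
and reflects the order, the least fixpoints correspond. -/

section Unfounded

variable {A : Type*}

lemma adlUnfounded_UA (D : DTheory A) (J : Interp (Lit A)) : ADLUnfounded D J (UA D J) := by
  rintro p ⟨S, hS, hp⟩
  have hmono : ∀ r : DRule A,
      (r.body ∩ (J.2 ∪ S)).Nonempty → (r.body ∩ (J.2 ∪ UA D J)).Nonempty :=
    fun r => Set.Nonempty.mono <| Set.inter_subset_inter_right _ <|
      Set.union_subset_union_right _ <| Set.subset_sUnion_of_mem hS
  exact ⟨fun r hr hh => hmono r ((hS p hp).1 r hr hh),
    fun r hr hh => ((hS p hp).2 r hr hh).imp_left (hmono r)⟩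

lemma pUnfounded_UP (P : NProgram A) (I : Interp A) : PUnfounded P I (UP P I) := by
  rintro p ⟨S, hS, hp⟩ r hr hh
  exact (hS p hp r hr hh).imp_left <| Set.Nonempty.mono <| Set.inter_subset_inter_right _ <|
    Set.union_subset_union_right _ <| Set.subset_sUnion_of_mem hS

lemma mem_snd_iff_of_UP_eq {P : NProgram A} {I : Interp A} (hU : UP P I = I.2) {a : A} :
    a ∈ I.2 ↔ ∀ r ∈ P, r.head = a → (r.pos ∩ I.2).Nonempty ∨ (r.neg ∩ I.1).Nonempty := by
  constructor
  · intro ha r hr hh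
    have h := pUnfounded_UP P I a (hU ▸ ha) r hr hh
    rwa [hU, Set.union_self] at h
  · intro h
    rw [← hU]
    refine ⟨{a}, ?_, rfl⟩
    rintro b rfl r hr hh
    exact (h r hr hh).imp_left
      (Set.Nonempty.mono (Set.inter_subset_inter_right _ Set.subset_union_left))

end Unfounded

section LitInterp

variable {A : Type*} {I : Interp A} {a : A}

/-- Program interpretations read on literals: `¬a` is true (false) when `a` is false (true). -/
def litInterp (I : Interp A) : Interp (Lit A) :=
  (Lit.pos '' I.1 ∪ Lit.neg '' I.2, Lit.pos '' I.2 ∪ Lit.neg '' I.1)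

@[simp] lemma pos_mem_litInterp_fst : Lit.pos a ∈ (litInterp I).1 ↔ a ∈ I.1 := by
  simp [litInterp]

@[simp] lemma neg_mem_litInterp_fst : Lit.neg a ∈ (litInterp I).1 ↔ a ∈ I.2 := by
  simp [litInterp]

@[simp] lemma pos_mem_litInterp_snd : Lit.pos a ∈ (litInterp I).2 ↔ a ∈ I.2 := by
  simp [litInterp]

@[simp] lemma neg_mem_litInterp_snd : Lit.neg a ∈ (litInterp I).2 ↔ a ∈ I.1 := by
  simp [litInterp]

@[simp] lemma preimage_pos_litInterp_snd (I : Interp A) : Lit.pos ⁻¹' (litInterp I).2 = I.2 :=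
  Set.ext fun _ => pos_mem_litInterp_snd

@[simp] lemma preimage_neg_litInterp_snd (I : Interp A) : Lit.neg ⁻¹' (litInterp I).2 = I.1 :=
  Set.ext fun _ => neg_mem_litInterp_snd

@[simp] lemma preimage_pos_litInterp_fst (I : Interp A) : Lit.pos ⁻¹' (litInterp I).1 = I.1 :=
  Set.ext fun _ => pos_mem_litInterp_fst

@[simp] lemma preimage_neg_litInterp_fst (I : Interp A) : Lit.neg ⁻¹' (litInterp I).1 = I.2 :=
  Set.ext fun _ => neg_mem_litInterp_fst

@[simp] lemma preimage_neg_image_pos (S : Set A) : Lit.neg ⁻¹' (Lit.pos '' S) = ∅ := by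
  ext; simp

lemma Lit.forall_mem_iff {S : Set (Lit A)} {Q : Lit A → Prop} :
    (∀ p ∈ S, Q p) ↔ (∀ a, Lit.pos a ∈ S → Q (Lit.pos a)) ∧ ∀ a, Lit.neg a ∈ S → Q (Lit.neg a) :=
  ⟨fun h => ⟨fun _ => h _, fun _ => h _⟩, fun h p => p.casesOn h.1 h.2⟩

end LitInterp

section DtTrans

variable {A : Type*} {P : NProgram A} {I : Interp A} {J : Interp (Lit A)} {a : A}

/-- The body `{a₁,…,aₙ,¬b₁,…,¬bₘ}` that `D_Π` gives to the rule `p ← a₁,…,aₙ, ∼b₁,…,∼bₘ`. -/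
def NRule.litBody (r : NRule A) : Set (Lit A) := Lit.pos '' r.pos ∪ Lit.neg '' r.neg

def NRule.toStrict (r : NRule A) : DRule A := ⟨RuleKind.strict, r.litBody, Lit.pos r.head⟩

def presumption (a : A) : DRule A := ⟨RuleKind.defeasible, ∅, Lit.neg a⟩

@[simp] lemma NRule.toStrict_head (r : NRule A) : r.toStrict.head = Lit.pos r.head := rfl
@[simp] lemma NRule.toStrict_body (r : NRule A) : r.toStrict.body = r.litBody := rfl
@[simp] lemma NRule.toStrict_kind (r : NRule A) : r.toStrict.kind = RuleKind.strict := rfl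
@[simp] lemma presumption_head (a : A) : (presumption a).head = Lit.neg a := rfl
@[simp] lemma presumption_body (a : A) : (presumption a).body = ∅ := rfl
@[simp] lemma presumption_kind (a : A) : (presumption a).kind = RuleKind.defeasible := rfl

lemma NRule.litBody_subset_iff {r : NRule A} {X : Set (Lit A)} :
    r.litBody ⊆ X ↔ r.pos ⊆ Lit.pos ⁻¹' X ∧ r.neg ⊆ Lit.neg ⁻¹' X := by
  rw [NRule.litBody, Set.union_subset_iff, Set.image_subset_iff, Set.image_subset_iff]

lemma NRule.litBody_inter_nonempty_iff {r : NRule A} {X : Set (Lit A)} :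
    (r.litBody ∩ X).Nonempty ↔
      (r.pos ∩ Lit.pos ⁻¹' X).Nonempty ∨ (r.neg ∩ Lit.neg ⁻¹' X).Nonempty := by
  rw [NRule.litBody, Set.union_inter_distrib_right, Set.union_nonempty,
    Set.image_inter_nonempty_iff, Set.image_inter_nonempty_iff]

lemma dtTrans_rules : (dtTrans P).rules = NRule.toStrict '' P ∪ Set.range presumption := by
  ext s
  simp only [dtTrans, Set.mem_union, Set.mem_ofPred_eq, Set.mem_image, Set.mem_range]
  exact or_congr (exists_congr fun _ => and_congr_right fun _ => eq_comm)
    (exists_congr fun _ => eq_comm)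

lemma dtTrans_Rs : (dtTrans P).Rs = NRule.toStrict '' P := by
  ext s
  simp only [DTheory.Rs, dtTrans_rules, Set.mem_union, Set.mem_range]
  constructor
  · rintro ⟨hs | ⟨a, rfl⟩, hk⟩
    · exact hs
    · simp at hk
  · rintro ⟨r, hr, rfl⟩
    exact ⟨Or.inl ⟨r, hr, rfl⟩, rfl⟩

lemma dtTrans_Rd : (dtTrans P).Rd = Set.range presumption := by
  ext s
  simp only [DTheory.Rd, dtTrans_rules, Set.mem_union, Set.mem_range]
  constructor
  · rintro ⟨⟨r, -, rfl⟩ | hs, hk⟩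
    · simp at hk
    · exact hs
  · rintro ⟨a, rfl⟩
    exact ⟨Or.inr ⟨a, rfl⟩, rfl⟩

@[simp] lemma dtTrans_conflicts : (dtTrans P).conflicts = CMin A := rfl

@[simp] lemma dtTrans_prec (r s : DRule A) : (dtTrans P).prec r s ↔ False := Iff.rfl

lemma exists_mem_dtTrans_rules {Q : DRule A → Prop} :
    (∃ s ∈ (dtTrans P).rules, Q s) ↔ (∃ r ∈ P, Q r.toStrict) ∨ ∃ a, Q (presumption a) := by
  simp [dtTrans_rules, or_and_right, exists_or]

lemma forall_mem_dtTrans_rules {Q : DRule A → Prop} :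
    (∀ s ∈ (dtTrans P).rules, Q s) ↔ (∀ r ∈ P, Q r.toStrict) ∧ ∀ a, Q (presumption a) := by
  simp [dtTrans_rules, or_imp, forall_and]

lemma pos_mem_TD_dtTrans_iff :
    Lit.pos a ∈ TD (dtTrans P) J ↔ ∃ r ∈ P, r.head = a ∧ r.litBody ⊆ J.1 := by
  simp [TD, exists_mem_dtTrans_rules]

lemma neg_mem_TD_dtTrans_iff :
    Lit.neg a ∈ TD (dtTrans P) J ↔ ∀ r ∈ P, r.head = a → (r.litBody ∩ J.2).Nonempty := by
  simp [TD, exists_mem_dtTrans_rules, forall_mem_dtTrans_rules, CMin, or_and_right, exists_or]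

lemma adlUnfounded_dtTrans_iff {S : Set (Lit A)} :
    ADLUnfounded (dtTrans P) J S ↔
      (∀ a, Lit.pos a ∈ S → ∀ r ∈ P, r.head = a → (r.litBody ∩ (J.2 ∪ S)).Nonempty) ∧
      ∀ a, Lit.neg a ∈ S → Lit.pos a ∈ TD (dtTrans P) J := by
  simp [ADLUnfounded, Lit.forall_mem_iff, dtTrans_Rs, dtTrans_Rd, pos_mem_TD_dtTrans_iff,
    exists_mem_dtTrans_rules, CMin, or_and_right, exists_or]

lemma neg_mem_UA_dtTrans_iff : Lit.neg a ∈ UA (dtTrans P) J ↔ Lit.pos a ∈ TD (dtTrans P) J := by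
  refine ⟨fun ⟨S, hS, ha⟩ => (adlUnfounded_dtTrans_iff.1 hS).2 a ha, fun h => ?_⟩
  refine ⟨{Lit.neg a}, adlUnfounded_dtTrans_iff.2 ⟨by simp, ?_⟩, rfl⟩
  rintro b hb
  obtain rfl : b = a := Lit.neg.inj hb
  exact h

lemma pos_mem_snd_iff_of_UA_eq (hU : UA (dtTrans P) J = J.2) :
    Lit.pos a ∈ J.2 ↔ ∀ r ∈ P, r.head = a → (r.litBody ∩ J.2).Nonempty := by
  constructor
  · intro ha
    have h := (adlUnfounded_dtTrans_iff.1 (adlUnfounded_UA (dtTrans P) J)).1 a (hU ▸ ha)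
    rwa [hU, Set.union_self] at h
  · intro h
    rw [← hU]
    refine ⟨{Lit.pos a}, adlUnfounded_dtTrans_iff.2 ⟨?_, by simp⟩, rfl⟩
    rintro b hb r hr rfl
    exact (h r hr (Lit.pos.inj hb)).mono
      (Set.inter_subset_inter_right _ Set.subset_union_left)

lemma pos_mem_TD_litInterp_iff : Lit.pos a ∈ TD (dtTrans P) (litInterp I) ↔ a ∈ TP P I := by
  simp [pos_mem_TD_dtTrans_iff, NRule.litBody_subset_iff, TP]

lemma neg_mem_TD_litInterp_iff :
    Lit.neg a ∈ TD (dtTrans P) (litInterp I) ↔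
      ∀ r ∈ P, r.head = a → (r.pos ∩ I.2).Nonempty ∨ (r.neg ∩ I.1).Nonempty := by
  simp [neg_mem_TD_dtTrans_iff, NRule.litBody_inter_nonempty_iff]

lemma pos_mem_UA_litInterp_iff (hT : TP P I ⊆ I.1) :
    Lit.pos a ∈ UA (dtTrans P) (litInterp I) ↔ a ∈ UP P I := by
  constructor
  · rintro ⟨S, hS : ADLUnfounded _ _ S, ha⟩
    rw [adlUnfounded_dtTrans_iff] at hS
    have hnegS : Lit.neg ⁻¹' S ⊆ I.1 := fun b hb => hT (pos_mem_TD_litInterp_iff.1 (hS.2 b hb))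
    refine ⟨Lit.pos ⁻¹' S, fun b hb r hr hh => ?_, ha⟩
    have h := hS.1 b hb r hr hh
    rwa [NRule.litBody_inter_nonempty_iff, Set.preimage_union, Set.preimage_union,
      preimage_pos_litInterp_snd, preimage_neg_litInterp_snd, Set.union_eq_left.2 hnegS] at h
  · rintro ⟨S, hS, ha⟩
    refine ⟨Lit.pos '' S, adlUnfounded_dtTrans_iff.2 ⟨fun b hb r hr hh => ?_, by simp⟩, a, ha, rfl⟩
    rw [NRule.litBody_inter_nonempty_iff, Set.preimage_union, Set.preimage_union,
      preimage_pos_litInterp_snd, preimage_neg_litInterp_snd,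
      Set.preimage_image_eq _ fun _ _ => Lit.pos.inj, preimage_neg_image_pos, Set.union_empty]
    exact hS b (by simpa using hb) r hr hh

theorem WA_litInterp_eq_iff : WA (dtTrans P) (litInterp I) = litInterp I ↔ WP P I = I := by
  constructor
  · intro h
    have hT : TD (dtTrans P) (litInterp I) = (litInterp I).1 := congrArg Prod.fst h
    have hU : UA (dtTrans P) (litInterp I) = (litInterp I).2 := congrArg Prod.snd h
    have hTP : TP P I = I.1 := Set.ext fun a => by
      rw [← pos_mem_TD_litInterp_iff, hT, pos_mem_litInterp_fst]
    refine Prod.ext hTP (Set.ext fun a => ?_)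
    change a ∈ UP P I ↔ a ∈ I.2
    rw [← pos_mem_UA_litInterp_iff hTP.subset, hU, pos_mem_litInterp_snd]
  · intro h
    have hTP : TP P I = I.1 := congrArg Prod.fst h
    have hUP : UP P I = I.2 := congrArg Prod.snd h
    refine Prod.ext (Set.ext fun l => ?_) (Set.ext fun l => ?_)
    · change l ∈ TD (dtTrans P) (litInterp I) ↔ l ∈ (litInterp I).1
      cases l with
      | pos a => rw [pos_mem_TD_litInterp_iff, hTP, pos_mem_litInterp_fst]
      | neg a => rw [neg_mem_TD_litInterp_iff, neg_mem_litInterp_fst, mem_snd_iff_of_UP_eq hUP]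
    · change l ∈ UA (dtTrans P) (litInterp I) ↔ l ∈ (litInterp I).2
      cases l with
      | pos a => rw [pos_mem_UA_litInterp_iff hTP.subset, hUP, pos_mem_litInterp_snd]
      | neg a =>
        rw [neg_mem_UA_dtTrans_iff, pos_mem_TD_litInterp_iff, hTP, neg_mem_litInterp_snd]

theorem exists_eq_litInterp_of_WA_eq (h : WA (dtTrans P) J = J) : ∃ I, J = litInterp I := by
  have hT : TD (dtTrans P) J = J.1 := congrArg Prod.fst h
  have hU : UA (dtTrans P) J = J.2 := congrArg Prod.snd h
  have hneg_fst : ∀ a, Lit.neg a ∈ J.1 ↔ Lit.pos a ∈ J.2 := fun a => by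
    rw [← hT, neg_mem_TD_dtTrans_iff, pos_mem_snd_iff_of_UA_eq hU]
  have hneg_snd : ∀ a, Lit.neg a ∈ J.2 ↔ Lit.pos a ∈ J.1 := fun a => by
    rw [← hU, ← hT]
    exact neg_mem_UA_dtTrans_iff
  refine ⟨(Lit.pos ⁻¹' J.1, Lit.pos ⁻¹' J.2), Prod.ext ?_ ?_⟩ <;>
    ext (a | a) <;> simp [hneg_fst, hneg_snd]

end DtTrans

theorem dtTrans_wfs_adl_general {A : Type*} (P : NProgram A)
    (IP : Interp A) (hIP : IsWFModel (WP P) IP)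
    (ID : Interp (Lit A)) (hID : IsWFModel (WA (dtTrans P)) ID) :
    ∀ p : A, (p ∈ IP.1 ↔ Lit.pos p ∈ ID.1) ∧ (p ∈ IP.2 ↔ Lit.pos p ∈ ID.2) := by
  obtain ⟨hfixP, hleastP⟩ := hIP
  obtain ⟨hfixD, hleastD⟩ := hID
  obtain ⟨I, rfl⟩ := exists_eq_litInterp_of_WA_eq hfixD
  have hIP_le : IP.1 ⊆ I.1 ∧ IP.2 ⊆ I.2 := hleastP I (WA_litInterp_eq_iff.1 hfixD)
  have hI_le : I.1 ⊆ IP.1 ∧ I.2 ⊆ IP.2 := by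
    obtain ⟨h1, h2⟩ := hleastD (litInterp IP) (WA_litInterp_eq_iff.2 hfixP)
    simpa using
      And.intro (Set.preimage_mono (f := Lit.pos) h1) (Set.preimage_mono (f := Lit.pos) h2)
  obtain rfl : I = IP := Prod.ext (hI_le.1.antisymm hIP_le.1) (hI_le.2.antisymm hIP_le.2)
  simp

/-- Let `Π` be a normal program and `D_Π` its defeasible theory translation. For every
atom `p`: `Π ⊨_WFS p` iff `D_Π ⊨_ADL p`, and `Π ⊣_WFS p` iff `D_Π ⊣_ADL p`. -/
theorem dtTrans_wfs_adl {A : Type*} (P : NProgram A) (hwf : P.WellFormed)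
    (IP : Interp A) (hIP : IsWFModel (WP P) IP)
    (ID : Interp (Lit A)) (hID : IsWFModel (WA (dtTrans P)) ID) :
    ∀ p : A, (p ∈ IP.1 ↔ Lit.pos p ∈ ID.1) ∧ (p ∈ IP.2 ↔ Lit.pos p ∈ ID.2) :=
  dtTrans_wfs_adl_general P IP hIP ID hID

end DLWFS
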